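/- arXiv:math/0004085 — 7 statements merged into one kernel-verified Lean document; each statement's English description precedes it below -/
import Mathlib

section
/- Fix a real parameter a with a < 1 and a ≠ 0, and set E(n) = (1-a)^(-n/2) for real n. For every real n > 2 one has n·C_15(n) - 2·C_6(n) + C_11(n) - C_12(n) = D_5(n), where C_6, C_11, C_12, C_15, D_5 are defined in the context. (This is the consistency of the paper's heat invariant E_2 with its stated Lorentz trace: contracting the terms C_6·(D_α T^{μαν} + D_α T^{ναμ}) + C_11·D^{μ}T^{ν} - C_12·D^{ν}T^{μ} + C_15·g^{μν}·D_α T^α of E_2 with g_{μν}, using the antisymmetry of the torsion tensor and the torsion trace T_μ = T^{α}_{αμ}, must produce the term D_5·D_α T^α of tr_L E_2.) -/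
/-! The identity does not depend on what `E(n) = (1 - a) ^ (-(n / 2))` is: with `E` replaced by an
independent variable, both sides are rational functions of `a`, `n`, `E` with denominators
`a`, `a ^ 2`, `n - 2`, `n`, `n + 2`, and clearing these turns the identity into a polynomial one. -/

namespace TorsionHeatInvariant

-- The coefficients of the paper, with `E` in place of `(1 - a) ^ (-(n / 2))`.

noncomputable def C6 (a n E : ℝ) : ℝ :=
  (E * (a^3*n^2 + 2*a^3*n - a^2*n^2 - 20*a^2*n - 36*a^2 + 12*a*n + 96*a - 48) + a^2*n^2
    - 16*a^2*n + 36*a^2 + 12*a*n - 96*a + 48) / (6*a^2*(n-2)*n*(n+2))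

noncomputable def C11 (a n E : ℝ) : ℝ :=
  ((1-a) * E * (-9*a^2*n^2 - 18*a^2*n + 76*a*n + 152*a - 24)
    + 2*(-13*a^2*n^2 + 6*a^2*n + 76*a^2 - 32*a*n - 88*a + 12)) / (3*a^2*(n-2)*n*(n+2))

noncomputable def C12 (a n E : ℝ) : ℝ :=
  (2*(1-a) * E * (-5*a^2*n^2 - 10*a^2*n + 38*a*n + 76*a + 12) - 31*a^2*n^2 + 26*a^2*n
    + 152*a^2 - 88*a*n - 128*a - 24) / (3*a^2*(n-2)*n*(n+2))

noncomputable def C15 (a n E : ℝ) : ℝ :=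
  (E * (-a^2*n^2 - 2*a^2*n + a*n^2 + 8*a*n + 12*a - 24) + a*n^3 - a*n^2 - 12*a + 24)
    / (6*a*(n-2)*n*(n+2))

noncomputable def D5 (a n E : ℝ) : ℝ :=
  (-E * (a^2*n^2 + 4*a^2*n - a*n^2 - 10*a*n - 36*a + 48) + a*n^3 - 3*a*n^2 + 14*a*n - 36*a + 48)
    / (6*a*(n-2)*n)

theorem trace_C_eq_D5 {a n : ℝ} (E : ℝ) (ha : a ≠ 0) (hn : n ≠ 0) (hn_sub : n - 2 ≠ 0)
    (hn_add : n + 2 ≠ 0) :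
    n * C15 a n E - 2 * C6 a n E + C11 a n E - C12 a n E = D5 a n E := by
  unfold C6 C11 C12 C15 D5
  field_simp
  ring

end TorsionHeatInvariant

theorem stmt_4_general (a : ℝ) (ha0 : a ≠ 0) :
    ∀ n : ℝ, 2 < n →
      n * (((1 - a) ^ (-(n / 2)) * (-a^2*n^2 - 2*a^2*n + a*n^2 + 8*a*n + 12*a - 24) + a*n^3 - a*n^2 - 12*a + 24) / (6*a*(n-2)*n*(n+2))) - 2 * (((1 - a) ^ (-(n / 2)) * (a^3*n^2 + 2*a^3*n - a^2*n^2 - 20*a^2*n - 36*a^2 + 12*a*n + 96*a - 48) + a^2*n^2 - 16*a^2*n + 36*a^2 + 12*a*n - 96*a + 48) / (6*a^2*(n-2)*n*(n+2))) + (((1-a) * (1 - a) ^ (-(n / 2)) * (-9*a^2*n^2 - 18*a^2*n + 76*a*n + 152*a - 24) + 2*(-13*a^2*n^2 + 6*a^2*n + 76*a^2 - 32*a*n - 88*a + 12)) / (3*a^2*(n-2)*n*(n+2))) - ((2*(1-a) * (1 - a) ^ (-(n / 2)) * (-5*a^2*n^2 - 10*a^2*n + 38*a*n + 76*a + 12)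 - 31*a^2*n^2 + 26*a^2*n + 152*a^2 - 88*a*n - 128*a - 24) / (3*a^2*(n-2)*n*(n+2)))
      =
      (-((1 - a) ^ (-(n / 2))) * (a^2*n^2 + 4*a^2*n - a*n^2 - 10*a*n - 36*a + 48) + a*n^3 - 3*a*n^2 + 14*a*n - 36*a + 48) / (6*a*(n-2)*n) := by
  intro n hn
  exact TorsionHeatInvariant.trace_C_eq_D5 ((1 - a) ^ (-(n / 2))) ha0 (by linarith) (by linarith) (by linarith)

theorem stmt_4 (a : ℝ) (ha1 : a < 1) (ha0 : a ≠ 0) :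
    ∀ n : ℝ, 2 < n →
      n * (((1 - a) ^ (-(n / 2)) * (-a^2*n^2 - 2*a^2*n + a*n^2 + 8*a*n + 12*a - 24) + a*n^3 - a*n^2 - 12*a + 24) / (6*a*(n-2)*n*(n+2))) - 2 * (((1 - a) ^ (-(n / 2)) * (a^3*n^2 + 2*a^3*n - a^2*n^2 - 20*a^2*n - 36*a^2 + 12*a*n + 96*a - 48) + a^2*n^2 - 16*a^2*n + 36*a^2 + 12*a*n - 96*a + 48) / (6*a^2*(n-2)*n*(n+2))) + (((1-a) * (1 - a) ^ (-(n / 2)) * (-9*a^2*n^2 - 18*a^2*n + 76*a*n + 152*a - 24) + 2*(-13*a^2*n^2 + 6*a^2*n + 76*a^2 - 32*a*n - 88*a + 12)) / (3*a^2*(n-2)*n*(n+2))) - ((2*(1-a) * (1 - a) ^ (-(n / 2)) * (-5*a^2*n^2 - 10*a^2*n + 38*a*n + 76*a + 12) - 31*a^2*n^2 + 26*a^2*n + 152*a^2 - 88*a*n - 128*a - 24) / (3*a^2*(n-2)*n*(n+2)))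
      =
      (-((1 - a) ^ (-(n / 2))) * (a^2*n^2 + 4*a^2*n - a*n^2 - 10*a*n - 36*a + 48) + a*n^3 - 3*a*n^2 + 14*a*n - 36*a + 48) / (6*a*(n-2)*n) :=
  stmt_4_general a ha0
end

section
/- Fix a real parameter a with a < 1 and a ≠ 0, and set E(n) = (1-a)^(-n/2) for real n. The function C_3 defined in the context tends, as real n tends to 2 with n ≠ 2, to the limit -((a-4)·ln(1-a))/(2a) + 2. (This is the paper's dimension n = 2 value of the coefficient C_3 in the heat invariant E_2 of the nonminimal operator on a 2-dimensional manifold with torsion.) -/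
/-!
The numerator of `C₃` vanishes at `n = 2`, so near `n = 2` the quotient is the difference
quotient of the numerator at `2` divided by `a n`; its limit is the derivative of the numerator
at `2` divided by `2 a`; differentiating `(1 - a) ^ (-(n / 2))` produces the logarithm.
-/

open Filter Topology

theorem tendsto_div_sub_mul_of_hasDerivAt {𝕜 : Type*} [NontriviallyNormedField 𝕜]
    {g h : 𝕜 → 𝕜} {x₀ D : 𝕜} (hg : HasDerivAt g D x₀) (hg₀ : g x₀ = 0)
    (hh : ContinuousAt h x₀) (hh₀ : h x₀ ≠ 0) :
    Tendsto (fun x => g x / ((x - x₀) * h x)) (𝓝[≠] x₀) (𝓝 (D / h x₀)) := by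
  refine ((hasDerivAt_iff_tendsto_slope.mp hg).div
    (hh.tendsto.mono_left nhdsWithin_le_nhds) hh₀).congr fun x => ?_
  rw [Pi.div_apply, slope_def_field, hg₀, sub_zero, div_div]

theorem hasDerivAt_mul_rpow_neg_half {b : ℝ} (hb : 0 < b) :
    HasDerivAt (fun n : ℝ => b * b ^ (-(n / 2))) (-Real.log b / 2) 2 := by
  have hexp : HasDerivAt (fun n : ℝ => -(n / 2)) (-(1 / 2)) 2 :=
    ((hasDerivAt_id (2 : ℝ)).div_const 2).neg
  have hpow := (Real.hasStrictDerivAt_const_rpow hb (-(2 / 2))).hasDerivAt.comp 2 hexp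
  refine (hpow.const_mul b).congr_deriv ?_
  rw [show -((2 : ℝ) / 2) = -1 by norm_num, Real.rpow_neg_one]
  field_simp

theorem mul_rpow_neg_half_two {b : ℝ} (hb : b ≠ 0) : b * b ^ (-((2 : ℝ) / 2)) = 1 := by
  rw [show -((2 : ℝ) / 2) = -1 by norm_num, Real.rpow_neg_one, mul_inv_cancel₀ hb]

noncomputable def c3Numerator (a n : ℝ) : ℝ :=
  (1 - a) * (1 - a) ^ (-(n / 2)) * (a * n - 8) + 3 * a * n - 8 * a + 8

theorem c3Numerator_two {a : ℝ} (ha : a < 1) : c3Numerator a 2 = 0 := by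
  rw [c3Numerator, mul_rpow_neg_half_two (by linarith)]
  ring

theorem hasDerivAt_c3Numerator_two {a : ℝ} (ha : a < 1) :
    HasDerivAt (c3Numerator a) (-(a - 4) * Real.log (1 - a) + 4 * a) 2 := by
  have hlin : HasDerivAt (fun n : ℝ => a * n - 8) a 2 := by
    simpa using ((hasDerivAt_id (2 : ℝ)).const_mul a).sub_const 8
  have hsum := (((hasDerivAt_mul_rpow_neg_half (b := 1 - a) (by linarith)).mul hlin).add
    (((hasDerivAt_id (2 : ℝ)).const_mul (3 * a)).sub_const (8 * a))).add_const 8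
  refine (hsum.congr_deriv ?_).congr_of_eventuallyEq (.of_forall fun n => ?_)
  · rw [mul_rpow_neg_half_two (by linarith)]
    ring
  · simp only [c3Numerator, Pi.add_apply, Pi.mul_apply, id]
    ring

theorem stmt_6 (a : ℝ) (ha1 : a < 1) (ha0 : a ≠ 0) :
    Filter.Tendsto
      (fun n : ℝ =>
        ((1-a) * (1 - a) ^ (-(n / 2)) * (a*n - 8) + 3*a*n - 8*a + 8) / (a*(n-2)*n))
      (nhdsWithin (2 : ℝ) {(2 : ℝ)}ᶜ)
      (nhds (-((a - 4) * Real.log (1 - a)) / (2*a) + 2)) := by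
  have hlim := tendsto_div_sub_mul_of_hasDerivAt (hasDerivAt_c3Numerator_two ha1)
    (c3Numerator_two ha1) (h := fun n => a * n) (by fun_prop) (by simpa using ha0)
  convert hlim using 2
  · simp only [c3Numerator]
    ring
  · field_simp
    ring
end

section
/- Fix a real parameter a with a < 1 and a ≠ 0, and set E(n) = (1-a)^(-n/2) for real n. The function C_5 defined in the context tends, as real n tends to 2 with n ≠ 2, to the limit ((15a - 61)·ln(1-a))/(12a) + (119a - 122)/(24·(1-a)). (This is the paper's dimension n = 2 value of the coefficient C_5 in the heat invariant E_2 of the nonminimal operator on a 2-dimensional manifold with torsion.) -/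
/-! At `n = 2` the numerator of `C_5(n)` vanishes: there `E(2) = (1 - a)⁻¹` and the first
polynomial factor is `120a² - 608a + 488 = (1 - a)(488 - 120a)`, which cancels the remaining
polynomial part `120a - 488`. So the limit is the derivative of the numerator at `n = 2`,
divided by the other factor `6a·n·(n + 2)` of the denominator at `n = 2`. -/

open Filter Topology

lemma tendsto_div_sub_mul_nhdsNE {f h : ℝ → ℝ} {f' x : ℝ} (hf : HasDerivAt f f' x)
    (hfx : f x = 0) (hh : ContinuousAt h x) (hhx : h x ≠ 0) :
    Tendsto (fun y => f y / ((y - x) * h y)) (𝓝[≠] x) (𝓝 (f' / h x)) := by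
  refine ((hasDerivAt_iff_tendsto_slope.mp hf).div
    (hh.tendsto.mono_left nhdsWithin_le_nhds) hhx).congr fun y => ?_
  rw [Pi.div_apply, slope_def_field, hfx, sub_zero, div_div]

lemma hasDerivAt_quadratic (p q r x : ℝ) :
    HasDerivAt (fun y => p * y ^ 2 + q * y + r) (2 * p * x + q) x := by
  refine ((((hasDerivAt_pow 2 x).const_mul p).add ((hasDerivAt_id' x).const_mul q)).add_const
    r).congr_deriv ?_
  push_cast
  ring

theorem stmt_8 (a : ℝ) (ha1 : a < 1) (ha0 : a ≠ 0) :
    Filter.Tendsto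
      (fun n : ℝ =>
        ((1 - a) ^ (-(n / 2)) * (15*a^2*n^2 + 30*a^2*n - 15*a*n^2 - 152*a*n - 244*a + 116*n + 256) - 43*a*n^2 + 24*a*n + 244*a - 116*n - 256) / (6*a*(n-2)*n*(n+2)))
      (nhdsWithin (2 : ℝ) {(2 : ℝ)}ᶜ)
      (nhds (((15*a - 61) * Real.log (1 - a)) / (12*a) + (119*a - 122) / (24*(1-a)))) := by
  have hc : 0 < 1 - a := by linarith
  have hE : (1 - a) ^ (-((2 : ℝ) / 2)) = (1 - a)⁻¹ := by norm_num [Real.rpow_neg_one]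
  have hexponent : HasDerivAt (fun n : ℝ => -(n / 2)) (-(1 / 2)) 2 :=
    ((hasDerivAt_id' 2).div_const 2).neg
  have hF : HasDerivAt (fun n : ℝ => (1 - a) ^ (-(n / 2)) *
        ((15*a^2 - 15*a) * n^2 + (30*a^2 - 152*a + 116) * n + (256 - 244*a)) +
        (-43*a * n^2 + (24*a - 116) * n + (244*a - 256))) _ 2 :=
    ((hexponent.const_rpow hc).mul
      (hasDerivAt_quadratic (15*a^2 - 15*a) (30*a^2 - 152*a + 116) (256 - 244*a) 2)).add
      (hasDerivAt_quadratic (-43*a) (24*a - 116) (244*a - 256) 2)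
  have hlim := tendsto_div_sub_mul_nhdsNE (h := fun n => 6*a*n*(n+2)) hF
    (by rw [hE]; field_simp; ring) (by fun_prop) (by simpa using ha0)
  convert hlim using 2 with n
  · ring
  · rw [hE]; field_simp; ring
end

section
/- Fix a real parameter a with a < 1 and a ≠ 0, and set E(n) = (1-a)^(-n/2) for real n. The function C_9 defined in the context tends, as real n tends to 2 with n ≠ 2, to the limit ((a - 2)·ln(1-a))/(4a^2) - (a^2 - 12a + 12)/(24a·(1-a)). (This is the paper's dimension n = 2 value of the coefficient C_9 in the heat invariant E_2 of the nonminimal operator on a 2-dimensional manifold with torsion.) -/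
/-!
Write the numerator of `C_9` as `N(n) = E(n) P(n) - P(-n)` with
`P(n) = a²n² + 6a²n + 8a² - 12an - 48a + 48`. Since `P(2) = 24(1-a)(2-a)`, `P(-2) = 24(2-a)` and
`E(2) = (1-a)⁻¹`, the numerator vanishes at `n = 2`, so the limit is `N'(2) / (a² · 2 · 4 · 6)`,
and the differentiation of `E(n) = (1-a)^(-n/2)` is what produces the logarithm.
-/

open Filter Topology

theorem tendsto_div_sub_mul_of_hasDerivAt_s12 {f g : ℝ → ℝ} {f' x : ℝ} (hf : HasDerivAt f f' x)
    (hfx : f x = 0) (hg : ContinuousAt g x) (hgx : g x ≠ 0) :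
    Tendsto (fun y => f y / ((y - x) * g y)) (𝓝[≠] x) (𝓝 (f' / g x)) := by
  have hslope : Tendsto (slope f x) (𝓝[≠] x) (𝓝 f') := hasDerivAt_iff_tendsto_slope.mp hf
  refine (hslope.div hg.continuousWithinAt.tendsto hgx).congr fun y => ?_
  rw [Pi.div_apply, slope_def_field, hfx, sub_zero, div_div]

theorem rpow_neg_two_div_two (x : ℝ) : x ^ (-((2 : ℝ) / 2)) = x⁻¹ := by
  norm_num [Real.rpow_neg_one]

namespace C9

def poly (a n : ℝ) : ℝ := a^2*n^2 + 6*a^2*n + 8*a^2 - 12*a*n - 48*a + 48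

noncomputable def numerator (a n : ℝ) : ℝ := (1 - a) ^ (-(n / 2)) * poly a n - poly a (-n)

theorem hasDerivAt_poly (a n : ℝ) : HasDerivAt (poly a) (2*a^2*n + 6*a^2 - 12*a) n := by
  have h := (((((hasDerivAt_pow 2 n).const_mul (a^2)).add ((hasDerivAt_id' n).const_mul (6*a^2))).add_const
    (8*a^2)).sub ((hasDerivAt_id' n).const_mul (12*a))).sub_const (48*a) |>.add_const 48
  refine (h.congr_deriv (by push_cast; ring)).congr_of_eventuallyEq (.of_forall fun m => ?_)
  simp only [poly, Pi.add_apply, Pi.sub_apply]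

theorem hasDerivAt_numerator {a : ℝ} (ha : a < 1) (n : ℝ) :
    HasDerivAt (numerator a)
      (Real.log (1 - a) * (-1 / 2) * (1 - a) ^ (-(n / 2)) * poly a n
        + (1 - a) ^ (-(n / 2)) * (2*a^2*n + 6*a^2 - 12*a) + (2*a^2*(-n) + 6*a^2 - 12*a)) n := by
  have hE : HasDerivAt (fun m : ℝ => (1 - a) ^ (-(m / 2)))
      (Real.log (1 - a) * (-1 / 2) * (1 - a) ^ (-(n / 2))) n := by
    have hexponent : HasDerivAt (fun m : ℝ => -(m / 2)) (-1 / 2) n :=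
      (hasDerivAt_mul_const (-1 / 2 : ℝ)).congr_of_eventuallyEq (.of_forall fun m => by ring)
    exact (hexponent.const_rpow (sub_pos.mpr ha)).congr_deriv (by ring)
  have hP_neg := (hasDerivAt_poly a (-n)).comp n (hasDerivAt_neg n)
  exact (((hE.mul (hasDerivAt_poly a n)).sub hP_neg).congr_deriv (by ring)).congr_of_eventuallyEq
    (.of_forall fun m => rfl)

theorem numerator_two {a : ℝ} (ha : a < 1) : numerator a 2 = 0 := by
  have h1a : 1 - a ≠ 0 := (sub_pos.mpr ha).ne'
  rw [numerator, rpow_neg_two_div_two, poly, poly]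
  field_simp
  ring

end C9

theorem stmt_12 (a : ℝ) (ha1 : a < 1) (ha0 : a ≠ 0) :
    Filter.Tendsto
      (fun n : ℝ =>
        ((1 - a) ^ (-(n / 2)) * (a^2*n^2 + 6*a^2*n + 8*a^2 - 12*a*n - 48*a + 48) - a^2*n^2 + 6*a^2*n - 8*a^2 - 12*a*n + 48*a - 48) / (a^2*(n-2)*n*(n+2)*(n+4)))
      (nhdsWithin (2 : ℝ) {(2 : ℝ)}ᶜ)
      (nhds (((a - 2) * Real.log (1 - a)) / (4*a^2) - (a^2 - 12*a + 12) / (24*a*(1-a)))) := by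
  have hcont : ContinuousAt (fun n : ℝ => a^2*n*(n+2)*(n+4)) 2 := by fun_prop
  have hden : a^2*2*(2+2)*(2+4) ≠ 0 := by positivity
  have hlim := tendsto_div_sub_mul_of_hasDerivAt_s12 (C9.hasDerivAt_numerator ha1 2)
    (C9.numerator_two ha1) hcont hden
  have h1a : 1 - a ≠ 0 := (sub_pos.mpr ha1).ne'
  convert hlim using 2
  · simp only [C9.numerator, C9.poly]
    ring
  · rw [rpow_neg_two_div_two, C9.poly]
    field_simp
    ring
end

section
/- Fix a real parameter a with a < 1 and a ≠ 0, and set E(n) = (1-a)^(-n/2) for real n. The function C_10 defined in the context tends, as real n tends to 2 with n ≠ 2, to the limit -((a^2 - 12a + 12)·ln(1-a))/(24a^2) - (2a^2 - 9a + 6)/(12a·(1-a)). (This is the paper's dimension n = 2 value of the coefficient C_10 in the heat invariant E_2 of the nonminimal operator on a 2-dimensional manifold with torsion.) -/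
/-!
The numerator N(n) = (1-a)^(-n/2) P(n) + Q(n) of C_10 vanishes at n = 2, while the denominator is
(n - 2) g(n) with g(2) = 576 a² ≠ 0. Hence the limit is the removable-singularity value N'(2) / g(2),
and N'(2) is computed by the product rule, with d/dn (1-a)^(-n/2) = -½ ln(1-a) (1-a)^(-n/2).
-/

open Filter Topology

theorem HasDerivAt.tendsto_div_sub_mul {f g : ℝ → ℝ} {f' x : ℝ} (hf : HasDerivAt f f' x)
    (hfx : f x = 0) (hg : ContinuousAt g x) (hgx : g x ≠ 0) :
    Tendsto (fun t => f t / ((t - x) * g t)) (𝓝[≠] x) (𝓝 (f' / g x)) := by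
  have hslope := (hasDerivAt_iff_tendsto_slope.mp hf).mul
    ((hg.tendsto.inv₀ hgx).mono_left nhdsWithin_le_nhds)
  rw [div_eq_mul_inv]
  refine hslope.congr fun t => ?_
  rw [slope_def_field, hfx, sub_zero, ← div_eq_mul_inv, div_div]

theorem hasDerivAt_cubic (c₃ c₂ c₁ c₀ x : ℝ) :
    HasDerivAt (fun t => c₃ * t ^ 3 + c₂ * t ^ 2 + c₁ * t + c₀)
      (3 * c₃ * x ^ 2 + 2 * c₂ * x + c₁) x := by
  have h := ((((hasDerivAt_pow 3 x).const_mul c₃).add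
    ((hasDerivAt_pow 2 x).const_mul c₂)).add ((hasDerivAt_id x).const_mul c₁)).add_const c₀
  exact h.congr_deriv (by norm_num; ring)

theorem stmt_13 (a : ℝ) (ha1 : a < 1) (ha0 : a ≠ 0) :
    Filter.Tendsto
      (fun n : ℝ =>
        ((1 - a) ^ (-(n / 2)) * (-a^3*n^3 - 6*a^3*n^2 + a^2*n^3 - 8*a^3*n + 30*a^2*n^2 + 152*a^2*n + 192*a^2 - 192*a*n - 768*a + 576) - a^2*n^3 - 6*a^2*n^2 + 88*a^2*n - 192*a^2 - 96*a*n + 768*a - 576) / (12*a^2*(n-2)*n*(n+2)*(n+4)))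
      (nhdsWithin (2 : ℝ) {(2 : ℝ)}ᶜ)
      (nhds (-((a^2 - 12*a + 12) * Real.log (1 - a)) / (24*a^2) - (2*a^2 - 9*a + 6) / (12*a*(1-a)))) := by
  have hb : 0 < 1 - a := sub_pos.mpr ha1
  have hE : HasDerivAt (fun n : ℝ => (1 - a) ^ (-(n / 2)))
      (Real.log (1 - a) * (-(1 / 2)) * (1 - a) ^ (-((2 : ℝ) / 2))) 2 :=
    ((hasDerivAt_id (2 : ℝ)).div_const 2).neg.const_rpow hb
  have hN := (hE.mul (hasDerivAt_cubic (a^2 - a^3) (30*a^2 - 6*a^3) (152*a^2 - 8*a^3 - 192*a)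
    (192*a^2 - 768*a + 576) 2)).add
    (hasDerivAt_cubic (-a^2) (-6*a^2) (88*a^2 - 96*a) (-192*a^2 + 768*a - 576) 2)
  have hE2 : (1 - a) ^ (-((2 : ℝ) / 2)) = (1 - a)⁻¹ := by norm_num [Real.rpow_neg_one]
  have key := hN.tendsto_div_sub_mul (g := fun n => 12*a^2*n*(n+2)*(n+4))
    (by simp only [Pi.add_apply, Pi.mul_apply, hE2]; field_simp; ring) (by fun_prop) (by positivity)
  convert key using 2 with n
  · simp only [Pi.add_apply, Pi.mul_apply]; ring
  · simp only [hE2]; field_simp; ring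
end

section
/- Fix a real parameter a with a < 1 and a ≠ 0, and set E(n) = (1-a)^(-n/2) for real n. The function C_15 defined in the context tends, as real n tends to 2 with n ≠ 2, to the limit -((a - 3)·ln(1-a))/(12a) - (7a - 10)/(24·(1-a)). (This is the paper's dimension n = 2 value of the coefficient C_15 in the heat invariant E_2 of the nonminimal operator on a 2-dimensional manifold with torsion.) -/
/-!
The numerator `N(n)` of `C_15(n)` vanishes at `n = 2`, so `C_15(n) = (N(n) / (n - 2)) / (6 a n (n + 2))`
is a difference quotient of `N` at `2` divided by a continuous factor, and the limit is
`N'(2) / (48 a)`.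
-/

open Filter Topology

theorem tendsto_div_sub_nhdsNE_of_hasDerivAt {f : ℝ → ℝ} {f' x : ℝ} (hf : HasDerivAt f f' x)
    (hfx : f x = 0) : Tendsto (fun y => f y / (y - x)) (𝓝[≠] x) (𝓝 f') := by
  refine (hasDerivAt_iff_tendsto_slope.mp hf).congr fun y => ?_
  rw [slope_def_field, hfx, sub_zero]

theorem hasDerivAt_rpow_neg_half {b : ℝ} (hb : 0 < b) (x : ℝ) :
    HasDerivAt (fun n : ℝ => b ^ (-(n / 2))) (-(Real.log b / 2) * b ^ (-(x / 2))) x :=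
  (((hasDerivAt_id' x).div_const 2).fun_neg.const_rpow hb).congr_deriv (by ring)

noncomputable def c15Num (a n : ℝ) : ℝ :=
  (1 - a) ^ (-(n / 2)) * (-a^2*n^2 - 2*a^2*n + a*n^2 + 8*a*n + 12*a - 24) + a*n^3 - a*n^2 - 12*a + 24

theorem c15Num_two {a : ℝ} (ha : a < 1) : c15Num a 2 = 0 := by
  have hb : 1 - a ≠ 0 := by linarith
  norm_num [c15Num, Real.rpow_neg_one]
  field_simp
  ring

theorem hasDerivAt_c15Num_two {a : ℝ} (ha : a < 1) :
    HasDerivAt (c15Num a) (-4 * (a - 3) * Real.log (1 - a) + (12*a - 6*a^2) / (1 - a) + 8*a) 2 := by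
  have hb : 0 < 1 - a := by linarith
  have hP : HasDerivAt (fun n : ℝ => -a^2*n^2 - 2*a^2*n + a*n^2 + 8*a*n + 12*a - 24)
      (12*a - 6*a^2) 2 := by
    have := (((((hasDerivAt_pow 2 (2 : ℝ)).const_mul (-a^2)).fun_sub
      ((hasDerivAt_id' (2 : ℝ)).const_mul (2*a^2))).fun_add
      ((hasDerivAt_pow 2 (2 : ℝ)).const_mul a)).fun_add
      ((hasDerivAt_id' (2 : ℝ)).const_mul (8*a))).add_const (12*a)
    exact (this.sub_const 24).congr_deriv (by norm_num; ring)
  have hN := (((((hasDerivAt_rpow_neg_half hb 2).fun_mul hP).fun_add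
    ((hasDerivAt_pow 3 (2 : ℝ)).const_mul a)).fun_sub
    ((hasDerivAt_pow 2 (2 : ℝ)).const_mul a)).sub_const (12*a)).add_const 24
  refine hN.congr_deriv ?_
  have hb' : 1 - a ≠ 0 := hb.ne'
  norm_num [Real.rpow_neg_one]
  field_simp
  ring

theorem stmt_17 (a : ℝ) (ha1 : a < 1) (ha0 : a ≠ 0) :
    Filter.Tendsto
      (fun n : ℝ =>
        ((1 - a) ^ (-(n / 2)) * (-a^2*n^2 - 2*a^2*n + a*n^2 + 8*a*n + 12*a - 24) + a*n^3 - a*n^2 - 12*a + 24) / (6*a*(n-2)*n*(n+2)))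
      (nhdsWithin (2 : ℝ) {(2 : ℝ)}ᶜ)
      (nhds (-((a - 3) * Real.log (1 - a)) / (12*a) - (7*a - 10) / (24*(1-a)))) := by
  have hb : 1 - a ≠ 0 := by linarith
  have hquot := tendsto_div_sub_nhdsNE_of_hasDerivAt (hasDerivAt_c15Num_two ha1) (c15Num_two ha1)
  have hden : Tendsto (fun n : ℝ => 6*a*n*(n+2)) (𝓝[≠] 2) (𝓝 (6*a*2*(2+2))) :=
    (Continuous.tendsto (by fun_prop) 2).mono_left nhdsWithin_le_nhds
  convert hquot.div hden (by simpa using ha0) using 2 with n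
  · rw [Pi.div_apply, c15Num, div_div]
    congr 1
    ring
  · field_simp
    ring
end

section
/- Fix a real parameter a with a < 1 and a ≠ 0, and set E(n) = (1-a)^(-n/2) for real n. The function C_16 defined in the context tends, as real n tends to 2 with n ≠ 2, to the limit -((a^2 - 6)·ln(1-a))/(24a^2) - (3a^2 + a - 6)/(24a·(1-a)). (This is the paper's dimension n = 2 value of the coefficient C_16 in the heat invariant E_2 of the nonminimal operator on a 2-dimensional manifold with torsion.) -/
open Filter Topology

theorem tendsto_mul_sub_add_div_of_hasDerivAt {𝕜 : Type*} [NontriviallyNormedField 𝕜]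
    {E P T D : 𝕜 → 𝕜} {E' x : 𝕜} (hE : HasDerivAt E E' x) (hP : ContinuousAt P x)
    (hT : ContinuousAt T x) (hD : ContinuousAt D x) (hDx : D x ≠ 0) :
    Tendsto (fun n => (P n * (E n - E x) + (n - x) * T n) / ((n - x) * D n)) (𝓝[≠] x)
      (𝓝 ((P x * E' + T x) / D x)) := by
  have hslope : Tendsto (fun n => (P n * slope E x n + T n) / D n) (𝓝[≠] x)
      (𝓝 ((P x * E' + T x) / D x)) :=
    ((hP.tendsto.mono_left nhdsWithin_le_nhds).mul hE.tendsto_slope |>.add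
      (hT.tendsto.mono_left nhdsWithin_le_nhds)).div (hD.tendsto.mono_left nhdsWithin_le_nhds) hDx
  refine hslope.congr' ?_
  filter_upwards [self_mem_nhdsWithin] with n hn
  have hnx : n - x ≠ 0 := sub_ne_zero.mpr hn
  rw [slope_def_field, mul_div_assoc', div_add' _ _ _ hnx, div_div]
  ring

theorem stmt_18 (a : ℝ) (ha1 : a < 1) (ha0 : a ≠ 0) :
    Filter.Tendsto
      (fun n : ℝ =>
        ((1 - a) ^ (-(n / 2)) * (-a^3*n^3 - 6*a^3*n^2 + a^2*n^3 - 8*a^3*n + 6*a^2*n^2 + 8*a^2*n + 48*a*n + 192*a - 288) + a^2*n^4 + 3*a^2*n^3 + 2*a^2*n^2 - 48*a^2*n + 96*a*n - 192*a + 288) / (12*a^2*(n-2)*n*(n+2)*(n+4)))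
      (nhdsWithin (2 : ℝ) {(2 : ℝ)}ᶜ)
      (nhds (-((a^2 - 6) * Real.log (1 - a)) / (24*a^2) - (3*a^2 + a - 6) / (24*a*(1-a)))) := by
  have hpos : 0 < 1 - a := by linarith
  have hE2 : (1 - a) ^ (-((2 : ℝ) / 2)) = (1 - a)⁻¹ := by norm_num [Real.rpow_neg_one]
  have hE : HasDerivAt (fun n : ℝ => (1 - a) ^ (-(n / 2)))
      (Real.log (1 - a) * (-(1 / 2)) * (1 - a) ^ (-((2 : ℝ) / 2))) 2 :=
    ((hasDerivAt_id (2 : ℝ)).div_const 2).neg.const_rpow hpos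
  -- As `E 2 = (1 - a)⁻¹`, the numerator `E n * P n + Q n` (`Q` the quartic) is `P n * (E n - E 2) + (n - 2) * T n`,
  -- since `P n + (1 - a) * Q n` is divisible by `n - 2`.
  have hlim := tendsto_mul_sub_add_div_of_hasDerivAt hE
    (P := fun n => -a^3*n^3 - 6*a^3*n^2 + a^2*n^3 - 8*a^3*n + 6*a^2*n^2 + 8*a^2*n + 48*a*n + 192*a - 288)
    (T := fun n => ((a^2 - a^3) * (n^3 + 6*n^2 + 20*n) - 96*a^2 + 144*a) * (1 - a)⁻¹)
    (D := fun n => 12*a^2*n*(n+2)*(n+4)) (by fun_prop) (by fun_prop) (by fun_prop) (by positivity)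
  convert hlim using 2 <;>
  · rw [hE2]
    field_simp
    ring
end
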